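/- Let K ⊆ Homeo⁺([0,1]) be a compact set and let x₀, y₀ ∈ (0,1) be such that f(x₀) > y₀ for every f ∈ K. Then there exists g ∈ Homeo⁺([0,1]) such that g(x₀) = y₀ and g(x) < f(x) for every x ∈ (0,1) and every f ∈ K. -/

import Mathlib

open MeasureTheory unitInterval Set

noncomputable section

/-- A subset of a group with a measurable structure is *Haar null* (Christensen) if it is
contained in a Borel (here: measurable) set `B` admitting a Borel probability measure `μ`
all of whose two-sided translates `g • B • h` are `μ`-null. -/
def IsHaarNull {G : Type*} [Group G] [MeasurableSpace G] (A : Set G) : Prop :=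
  ∃ B : Set G, A ⊆ B ∧ MeasurableSet B ∧
    ∃ μ : Measure G, IsProbabilityMeasure μ ∧ ∀ g h : G, μ ((fun b => g * b * h) '' B) = 0

/-- The group of self-homeomorphisms of a space, with `(f * g) x = f (g x)`. -/
instance Homeomorph.instGroupSelf {X : Type*} [TopologicalSpace X] : Group (X ≃ₜ X) where
  mul f g := g.trans f
  one := Homeomorph.refl X
  inv := Homeomorph.symm
  mul_assoc _ _ _ := Homeomorph.ext fun _ => rfl
  one_mul _ := Homeomorph.ext fun _ => rfl
  mul_one _ := Homeomorph.ext fun _ => rfl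
  inv_mul_cancel f := Homeomorph.ext fun x => f.symm_apply_apply x

/-- The topology of uniform convergence (= compact-open topology, as the underlying space is
compact) on the self-homeomorphism group. -/
instance Homeomorph.instTopologicalSpaceSelf {X : Type*} [TopologicalSpace X] :
    TopologicalSpace (X ≃ₜ X) :=
  TopologicalSpace.induced (fun f => (⟨⇑f, f.continuous⟩ : C(X, X))) inferInstance

/-- The Polish group `Homeo⁺([0,1])` of increasing homeomorphisms of `[0,1]`. -/
def HomeoPlusI : Subgroup (I ≃ₜ I) where
  carrier := {f | Monotone ⇑f}
  one_mem' := fun _ _ h => h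
  mul_mem' := fun hf hg => hf.comp hg
  inv_mem' := by
    intro f hf a b hab
    show f.symm a ≤ f.symm b
    by_contra hcon
    push_neg at hcon
    have h1 : f (f.symm b) ≤ f (f.symm a) := hf hcon.le
    rw [f.apply_symm_apply, f.apply_symm_apply] at h1
    have : a = b := le_antisymm hab h1
    subst this
    exact lt_irrefl _ hcon

instance : MeasurableSpace HomeoPlusI := borel _
instance : BorelSpace HomeoPlusI := ⟨rfl⟩

/-- The set of fixed points of `f ∈ Homeo⁺([0,1])`. -/
def fixSet (f : HomeoPlusI) : Set I := {x | (f : I ≃ₜ I) x = x}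

/-! The pointwise minimum `m x = min_{f ∈ K} f x` is attained by compactness, so it is continuous,
strictly increasing and fixes `0` and `1`: `m` is itself an element of `Homeo⁺([0,1])` lying below
every `f ∈ K`, with `m x₀ > y₀`. Hence `x₁ := m⁻¹ y₀ < x₀`, and `g := m ∘ ψ` works for any
`ψ ∈ Homeo⁺([0,1])` with `ψ x₀ = x₁` and `ψ x < x` on `(0,1)`, such as `ψ x = x ^ p` with
`p = log x₁ / log x₀ > 1`. -/

namespace HomeoPlusI

lemma strictMono (f : HomeoPlusI) : StrictMono (f : I ≃ₜ I) :=
  f.2.strictMono_of_injective (f : I ≃ₜ I).injective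

lemma map_zero (f : HomeoPlusI) : (f : I ≃ₜ I) 0 = 0 := by
  obtain ⟨x, hx⟩ := (f : I ≃ₜ I).surjective 0
  exact le_antisymm ((f.2 nonneg').trans_eq hx) nonneg'

lemma map_one (f : HomeoPlusI) : (f : I ≃ₜ I) 1 = 1 := by
  obtain ⟨x, hx⟩ := (f : I ≃ₜ I).surjective 1
  exact le_antisymm le_one' (hx.symm.trans_le (f.2 le_one'))

lemma continuous_eval : Continuous fun p : I × HomeoPlusI => (p.2 : I ≃ₜ I) p.1 := by
  have hcoe : Continuous fun f : HomeoPlusI =>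
      (⟨(f : I ≃ₜ I), (f : I ≃ₜ I).continuous⟩ : C(I, I)) :=
    (continuous_induced_dom (f := fun f : I ≃ₜ I => (⟨f, f.continuous⟩ : C(I, I)))).comp
      continuous_subtype_val
  exact ContinuousEval.continuous_eval.comp ((hcoe.comp continuous_snd).prodMk continuous_fst)

def ofStrictMono (u : I → I) (hu : StrictMono u) (hc : Continuous u) (h0 : u 0 = 0)
    (h1 : u 1 = 1) : HomeoPlusI :=
  have hsurj : Function.Surjective u := fun y =>
    intermediate_value_univ 0 1 hc (by rw [h0, h1]; exact ⟨nonneg', le_one'⟩)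
  ⟨Continuous.homeoOfEquivCompactToT2 (f := Equiv.ofBijective u ⟨hu.injective, hsurj⟩) hc,
    hu.monotone⟩

lemma mul_apply (f g : HomeoPlusI) (x : I) :
    ((f * g : HomeoPlusI) : I ≃ₜ I) x = (f : I ≃ₜ I) ((g : I ≃ₜ I) x) :=
  rfl

def rpow (p : ℝ) (hp : 0 < p) : HomeoPlusI :=
  ofStrictMono
    (fun x => ⟨(x : ℝ) ^ p, Real.rpow_nonneg x.2.1 p, Real.rpow_le_one x.2.1 x.2.2 hp.le⟩)
    (fun _ _ hxy => Real.rpow_lt_rpow nonneg' hxy hp)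
    ((continuous_subtype_val.rpow_const fun _ => Or.inr hp.le).subtype_mk _)
    (Subtype.ext (Real.zero_rpow hp.ne'))
    (Subtype.ext (Real.one_rpow p))

lemma exists_apply_eq {a b : I} (ha : (a : ℝ) ∈ Ioo 0 1) (hb : (b : ℝ) ∈ Ioo 0 1) :
    ∃ ψ : HomeoPlusI, (ψ : I ≃ₜ I) a = b :=
  ⟨rpow _ (Real.logb_pos_of_base_lt_one ha.1 ha.2 hb.1 hb.2),
    Subtype.ext (Real.rpow_logb ha.1 ha.2.ne hb.1)⟩

lemma exists_apply_eq_of_lt {a b : I} (ha : (a : ℝ) ∈ Ioo 0 1) (hb : (b : ℝ) ∈ Ioo 0 1)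
    (hba : b < a) :
    ∃ ψ : HomeoPlusI, (ψ : I ≃ₜ I) a = b ∧ ∀ x : I, (x : ℝ) ∈ Ioo 0 1 → (ψ : I ≃ₜ I) x < x := by
  have hp : 1 < Real.logb a b :=
    (Real.lt_logb_iff_rpow_lt_of_base_lt_one ha.1 ha.2 hb.1).2 (by simpa using hba)
  exact ⟨rpow _ (one_pos.trans hp), Subtype.ext (Real.rpow_logb ha.1 ha.2.ne hb.1),
    fun x hx => Real.rpow_lt_self_of_lt_one hx.1 hx.2 hp⟩

def lowerEnvelope (K : Set HomeoPlusI) (x : I) : I :=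
  sInf ((fun f : HomeoPlusI => (f : I ≃ₜ I) x) '' K)

section lowerEnvelope

variable {K : Set HomeoPlusI}

lemma lowerEnvelope_le {f : HomeoPlusI} (hf : f ∈ K) (x : I) :
    lowerEnvelope K x ≤ (f : I ≃ₜ I) x :=
  sInf_le ⟨f, hf, rfl⟩

lemma exists_apply_eq_lowerEnvelope (hK : IsCompact K) (hne : K.Nonempty) (x : I) :
    ∃ f ∈ K, (f : I ≃ₜ I) x = lowerEnvelope K x :=
  (hK.image (continuous_eval.comp (continuous_const.prodMk continuous_id))).sInf_mem
    (hne.image _)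

lemma continuous_lowerEnvelope (hK : IsCompact K) : Continuous (lowerEnvelope K) :=
  hK.continuous_sInf (f := fun (x : I) (f : HomeoPlusI) => (f : I ≃ₜ I) x) continuous_eval

lemma strictMono_lowerEnvelope (hK : IsCompact K) (hne : K.Nonempty) :
    StrictMono (lowerEnvelope K) := by
  intro x y hxy
  obtain ⟨f, hf, hfy⟩ := exists_apply_eq_lowerEnvelope hK hne y
  calc lowerEnvelope K x ≤ (f : I ≃ₜ I) x := lowerEnvelope_le hf x
    _ < (f : I ≃ₜ I) y := strictMono f hxy
    _ = lowerEnvelope K y := hfy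

lemma lowerEnvelope_zero (hne : K.Nonempty) : lowerEnvelope K 0 = 0 := by
  obtain ⟨f, hf⟩ := hne
  exact le_antisymm ((lowerEnvelope_le hf 0).trans_eq (map_zero f)) nonneg'

lemma lowerEnvelope_one : lowerEnvelope K 1 = 1 :=
  le_antisymm le_one' (le_sInf (by rintro _ ⟨f, -, rfl⟩; exact (map_one f).ge))

def lowerEnvelopeHomeo (hK : IsCompact K) (hne : K.Nonempty) : HomeoPlusI :=
  ofStrictMono (lowerEnvelope K) (strictMono_lowerEnvelope hK hne) (continuous_lowerEnvelope hK)
    (lowerEnvelope_zero hne) lowerEnvelope_one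

end lowerEnvelope

end HomeoPlusI

open HomeoPlusI in
/-- Given a compact `K ⊆ Homeo⁺([0,1])` and `x₀, y₀ ∈ (0,1)` with `f x₀ > y₀` for all `f ∈ K`,
there is `g ∈ Homeo⁺([0,1])` with `g x₀ = y₀` lying strictly below every `f ∈ K` on `(0,1)`. -/
theorem stmt_9 (K : Set HomeoPlusI) (hK : IsCompact K) (x₀ y₀ : I)
    (hx₀ : (x₀ : ℝ) ∈ Set.Ioo (0 : ℝ) 1) (hy₀ : (y₀ : ℝ) ∈ Set.Ioo (0 : ℝ) 1)
    (h : ∀ f ∈ K, (y₀ : ℝ) < (((f : I ≃ₜ I) x₀ : I) : ℝ)) :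
    ∃ g : HomeoPlusI, (g : I ≃ₜ I) x₀ = y₀ ∧
      ∀ x : I, (x : ℝ) ∈ Set.Ioo (0 : ℝ) 1 → ∀ f ∈ K,
        (((g : I ≃ₜ I) x : I) : ℝ) < (((f : I ≃ₜ I) x : I) : ℝ) := by
  rcases K.eq_empty_or_nonempty with rfl | hne
  · obtain ⟨g, hg⟩ := HomeoPlusI.exists_apply_eq hx₀ hy₀
    exact ⟨g, hg, fun _ _ _ hf => absurd hf (notMem_empty _)⟩
  set m := lowerEnvelopeHomeo hK hne
  set x₁ := (m : I ≃ₜ I).symm y₀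
  have hmx₁ : (m : I ≃ₜ I) x₁ = y₀ := (m : I ≃ₜ I).apply_symm_apply y₀
  have hx₁x₀ : x₁ < x₀ := by
    obtain ⟨f, hf, hfx₀⟩ := exists_apply_eq_lowerEnvelope hK hne x₀
    rw [← (strictMono m).lt_iff_lt, hmx₁]
    exact (Subtype.coe_lt_coe.1 (h f hf)).trans_eq hfx₀
  have hx₁ : (x₁ : ℝ) ∈ Ioo 0 1 := by
    have hx₁pos : (0 : I) < x₁ := by
      rw [← (strictMono m).lt_iff_lt, hmx₁, HomeoPlusI.map_zero m]
      exact hy₀.1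
    exact ⟨hx₁pos, (Subtype.coe_lt_coe.2 hx₁x₀).trans hx₀.2⟩
  obtain ⟨ψ, hψx₀, hψ⟩ := exists_apply_eq_of_lt hx₀ hx₁ hx₁x₀
  refine ⟨m * ψ, by rw [mul_apply, hψx₀, hmx₁], fun x hx f hf => ?_⟩
  exact (strictMono m (hψ x hx)).trans_le (lowerEnvelope_le hf x)

end
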